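/- arXiv:2406.07449 — 2 statements merged into one kernel-verified Lean document; each statement's English description precedes it below -/
import Mathlib

section
/- Let Z_1, ..., Z_{m+1} be exchangeable real-valued random variables with no ties almost surely. Define Q as the ceil((1-α)(m+1))-th smallest value among Z_1,...,Z_m (with Q = +∞ if (1-α)(m+1) > m). Then P(Z_{m+1} ≤ Q) ≥ 1 - α. -/
open MeasureTheory
open scoped ENNReal

/-- The `k`-th smallest value among `v 0, ..., v (m-1)` (1-indexed `k`). -/
noncomputable def kthSmallest {m : ℕ} (v : Fin m → ℝ) (k : ℕ) : ℝ :=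
  sInf {t : ℝ | k ≤ (Finset.univ.filter (fun i => v i ≤ t)).card}

open Finset in
lemma kth_mem_iff {m : ℕ} (v : Fin (m + 1) → ℝ) (hv : Function.Injective v)
    (k : ℕ) (hk1 : 1 ≤ k) (hkm : k ≤ m) :
    v (Fin.last m) ≤ kthSmallest (fun i : Fin m => v i.castSucc) k ↔
      (Finset.univ.filter (fun i : Fin m => v i.castSucc ≤ v (Fin.last m))).card < k := by
  classical
  have hm : 0 < m := hk1.trans hkm
  have : Nonempty (Fin m) := Fin.pos_iff_nonempty.mp hm
  set w : Fin m → ℝ := fun i => v i.castSucc with hw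
  have hww : ∀ i (t : ℝ), (v i.castSucc ≤ t) = (w i ≤ t) := fun _ _ => rfl
  have hwne : ∀ i, w i ≠ v (Fin.last m) := fun i h => (Fin.castSucc_lt_last i).ne (hv h)
  have hS_ne : Set.Nonempty {t : ℝ | k ≤ (univ.filter (fun i => w i ≤ t)).card} := by
    refine ⟨(univ.image w).max' (by simp), ?_⟩
    have hall : ∀ i : Fin m, w i ≤ (univ.image w).max' (by simp) :=
      fun i => le_max' _ _ (mem_image_of_mem w (mem_univ i))
    have heq : (univ.filter (fun i => w i ≤ (univ.image w).max' (by simp))) = univ :=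
      filter_true_of_mem (fun i _ => hall i)
    simp only [Set.mem_setOf_eq, heq, card_univ, Fintype.card_fin]
    exact hkm
  have hS_bdd : BddBelow {t : ℝ | k ≤ (univ.filter (fun i => w i ≤ t)).card} := by
    refine ⟨(univ.image w).min' (by simp), fun t ht => ?_⟩
    have hpos : 0 < (univ.filter (fun i => w i ≤ t)).card := lt_of_lt_of_le hk1 ht
    obtain ⟨i, hi⟩ := card_pos.mp hpos
    exact le_trans (min'_le _ _ (mem_image_of_mem w (mem_univ i))) (mem_filter.mp hi).2
  have hQ : kthSmallest w k = sInf {t : ℝ | k ≤ (univ.filter (fun i => w i ≤ t)).card} := rfl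
  constructor
  · intro hle
    by_contra hc
    push_neg at hc
    replace hc : k ≤ (univ.filter (fun i => w i ≤ v (Fin.last m))).card := hc
    have hFne : (univ.filter (fun i => w i ≤ v (Fin.last m))).Nonempty :=
      card_pos.mp (lt_of_lt_of_le hk1 hc)
    have hFimg : ((univ.filter (fun i => w i ≤ v (Fin.last m))).image w).Nonempty := by
      simpa using hFne
    set t := ((univ.filter (fun i => w i ≤ v (Fin.last m))).image w).max' hFimg with ht
    have htlt : t < v (Fin.last m) := by
      rw [ht, Finset.max'_lt_iff]
      intro b hb
      obtain ⟨i0, hi0, rfl⟩ := mem_image.mp hb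
      exact lt_of_le_of_ne (mem_filter.mp hi0).2 (hwne i0)
    have htS : t ∈ {t : ℝ | k ≤ (univ.filter (fun i => w i ≤ t)).card} := by
      have hsub : (univ.filter (fun i => w i ≤ v (Fin.last m)))
          ⊆ univ.filter (fun i => w i ≤ t) := by
        intro i hi
        exact mem_filter.mpr ⟨mem_univ i,
          le_max' _ _ (mem_image_of_mem w hi)⟩
      exact le_trans hc (card_le_card hsub)
    have h1 := csInf_le hS_bdd htS
    rw [hQ] at hle
    linarith
  · intro hc
    replace hc : (univ.filter (fun i => w i ≤ v (Fin.last m))).card < k := hc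
    rw [hQ]
    refine le_csInf hS_ne fun t ht => ?_
    by_contra h
    push_neg at h
    have hsub : univ.filter (fun i => w i ≤ t) ⊆
        univ.filter (fun i => w i ≤ v (Fin.last m)) := by
      intro i hi
      exact mem_filter.mpr ⟨mem_univ i, le_trans (mem_filter.mp hi).2 h.le⟩
    exact absurd (le_trans ht (card_le_card hsub)) (not_le.mpr hc)

open Finset in
lemma count_rank_le {n : ℕ} (v : Fin n → ℝ) (hv : Function.Injective v) (k : ℕ) (hk : k ≤ n) :
    (univ.filter (fun i : Fin n =>
      (univ.filter (fun j => v j ≤ v i)).card ≤ k)).card = k := by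
  classical
  set e : Fin n → ℕ := fun i => (univ.filter (fun j => v j ≤ v i)).card with he
  have key : ∀ i j, v i < v j → e i < e j := by
    intro i j hij
    apply card_lt_card
    rw [Finset.ssubset_iff_of_subset]
    · exact ⟨j, mem_filter.mpr ⟨mem_univ j, le_refl _⟩,
        fun hj => absurd (mem_filter.mp hj).2 (not_le.mpr hij)⟩
    · intro l hl
      exact mem_filter.mpr ⟨mem_univ l, le_trans (mem_filter.mp hl).2 hij.le⟩
  have he_inj : Function.Injective e := by
    intro i j h
    rcases lt_trichotomy (v i) (v j) with hlt | heq | hgt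
    · exact absurd h (key i j hlt).ne
    · exact hv heq
    · exact absurd h.symm (key j i hgt).ne
  have he1 : ∀ i, 1 ≤ e i := fun i =>
    card_pos.mpr ⟨i, mem_filter.mpr ⟨mem_univ i, le_refl _⟩⟩
  have heN : ∀ i, e i ≤ n := fun i => le_trans (card_filter_le _ _) (by simp)
  have himg : univ.image e = Icc 1 n := by
    apply eq_of_subset_of_card_le
    · intro x hx
      obtain ⟨i, _, rfl⟩ := mem_image.mp hx
      exact mem_Icc.mpr ⟨he1 i, heN i⟩
    · rw [Nat.card_Icc, card_image_of_injective _ he_inj, card_univ, Fintype.card_fin]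
      omega
  have h1 : (univ.filter (fun i => e i ≤ k)).card
      = ((univ.filter (fun i => e i ≤ k)).image e).card :=
    (card_image_of_injective _ he_inj).symm
  have h3 : (univ.filter (fun i => e i ≤ k)).image e
      = (univ.image e).filter (fun x => x ≤ k) := by
    ext x
    simp only [Finset.mem_image, Finset.mem_filter, Finset.mem_univ, true_and]
    constructor
    · rintro ⟨i, hik, rfl⟩; exact ⟨⟨i, rfl⟩, hik⟩
    · rintro ⟨⟨i, rfl⟩, hxk⟩; exact ⟨i, hxk, rfl⟩
  rw [h1, h3, himg]
  have h2 : (Icc 1 n).filter (fun x => x ≤ k) = Icc 1 k := by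
    ext x
    simp only [mem_filter, mem_Icc]
    omega
  rw [h2, Nat.card_Icc]
  omega

lemma meas_rank {n : ℕ} (i : Fin n) (k : ℕ) :
    MeasurableSet {v : Fin n → ℝ | (Finset.univ.filter (fun j => v j ≤ v i)).card ≤ k} := by
  classical
  have h : Measurable (fun v : Fin n → ℝ =>
      (Finset.univ.filter (fun j => v j ≤ v i)).card) := by
    simp only [Finset.card_filter]
    exact Finset.measurable_sum _ (fun j _ =>
      Measurable.ite (measurableSet_le (measurable_pi_apply j) (measurable_pi_apply i))
        measurable_const measurable_const)
  exact h (measurableSet_Iic (a := k))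

/-- Conformal calibration lower bound: for exchangeable, a.s. tie-free random variables
`Z 0, ..., Z m`, the probability that `Z m` is at most the `⌈(1-α)(m+1)⌉`-th smallest of the
first `m` values (the event being all of `Ω` when `(1-α)(m+1) > m`, i.e. `Q = +∞`)
is at least `1 - α`. -/
theorem conformal_coverage_lower_bound
    {Ω : Type*} [MeasurableSpace Ω] (P : Measure Ω) [IsProbabilityMeasure P]
    (m : ℕ) (Z : Fin (m + 1) → Ω → ℝ) (hZ : ∀ i, Measurable (Z i))
    (hexch : ∀ π : Equiv.Perm (Fin (m + 1)),
      Measure.map (fun ω => fun i => Z (π i) ω) P = Measure.map (fun ω => fun i => Z i ω) P)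
    (hties : ∀ i j, i ≠ j → P {ω | Z i ω = Z j ω} = 0)
    (α : ℝ) (hα0 : 0 < α) (hα1 : α < 1) :
    ENNReal.ofReal (1 - α) ≤
      P {ω | (m : ℝ) < (1 - α) * (m + 1) ∨
          Z (Fin.last m) ω ≤
            kthSmallest (fun i : Fin m => Z i.castSucc ω) ⌈(1 - α) * (m + 1)⌉₊} := by
  classical
  set E : Set Ω := {ω | (m : ℝ) < (1 - α) * (m + 1) ∨
          Z (Fin.last m) ω ≤
            kthSmallest (fun i : Fin m => Z i.castSucc ω) ⌈(1 - α) * (m + 1)⌉₊} with hE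
  by_cases hcase : (m : ℝ) < (1 - α) * (m + 1)
  · have hEu : E = Set.univ := by
      ext ω; simp [hE, hcase]
    rw [hEu, measure_univ]
    exact ENNReal.ofReal_le_one.mpr (by linarith)
  · push_neg at hcase
    set k := ⌈(1 - α) * (m + 1)⌉₊ with hkdef
    have hk1 : 1 ≤ k := Nat.one_le_ceil_iff.mpr (mul_pos (by linarith) (by positivity))
    have hkm : k ≤ m := Nat.ceil_le.mpr hcase
    set V : Ω → Fin (m + 1) → ℝ := fun ω i => Z i ω with hVdef
    have hV : Measurable V := measurable_pi_lambda _ hZ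
    set A : Fin (m + 1) → Set (Fin (m + 1) → ℝ) := fun i =>
      {v | (Finset.univ.filter (fun j => v j ≤ v i)).card ≤ k} with hAdef
    set B : Fin (m + 1) → Set Ω := fun i => V ⁻¹' A i with hBdef
    have hB : ∀ i, MeasurableSet (B i) := fun i => hV (meas_rank i k)
    -- exchangeability: all B i have the same measure
    have hPA : ∀ i, P (B i) = P (B (Fin.last m)) := by
      intro i
      set π := Equiv.swap i (Fin.last m) with hπ
      have hπlast : π (Fin.last m) = i := Equiv.swap_apply_right _ _
      have h1 : B i = (fun ω => fun j => Z (π j) ω) ⁻¹' (A (Fin.last m)) := by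
        ext ω
        have hcard : (Finset.univ.filter
              (fun j => Z (π j) ω ≤ Z (π (Fin.last m)) ω)).card
            = (Finset.univ.filter (fun j => Z j ω ≤ Z (π (Fin.last m)) ω)).card :=
          Finset.card_equiv π (fun j => by simp)
        simp only [hBdef, hAdef, Set.mem_preimage, Set.mem_setOf_eq, hVdef]
        rw [hcard, hπlast]
      have hmeas2 : Measurable (fun ω => fun j => Z (π j) ω) :=
        measurable_pi_lambda _ (fun j => hZ _)
      rw [h1, ← Measure.map_apply hmeas2 (meas_rank _ k), hexch π,
        Measure.map_apply hV (meas_rank _ k)]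
    -- ties are null
    set D : Set Ω := {ω | Function.Injective (V ω)} with hDdef
    have hD : P Dᶜ = 0 := by
      have hsub : Dᶜ ⊆ ⋃ i, ⋃ j, {ω | i ≠ j ∧ Z i ω = Z j ω} := by
        intro ω hω
        simp only [hDdef, Set.mem_compl_iff, Set.mem_setOf_eq] at hω
        obtain ⟨a, b, hab, hne⟩ := Function.not_injective_iff.mp hω
        exact Set.mem_iUnion.mpr ⟨a, Set.mem_iUnion.mpr ⟨b, hne, hab⟩⟩
      have hnull : P (⋃ i, ⋃ j, {ω | i ≠ j ∧ Z i ω = Z j ω}) = 0 := by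
        refine measure_iUnion_null fun i => measure_iUnion_null fun j => ?_
        by_cases h : i = j
        · subst h; simp
        · exact measure_mono_null (fun ω hω => hω.2) (hties i j h)
      exact measure_mono_null hsub hnull
    have hDae : ∀ᵐ ω ∂P, Function.Injective (V ω) := by
      rw [MeasureTheory.ae_iff]
      exact hD
    -- a.e. count
    have hcount_ae : ∀ᵐ ω ∂P,
        (((Finset.univ.filter (fun i : Fin (m + 1) => ω ∈ B i)).card : ℕ) : ℝ≥0∞)
          = ((k : ℕ) : ℝ≥0∞) := by
      filter_upwards [hDae] with ω hω
      have hset : (Finset.univ.filter (fun i : Fin (m + 1) => ω ∈ B i))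
          = (Finset.univ.filter (fun i : Fin (m + 1) =>
              (Finset.univ.filter (fun j => V ω j ≤ V ω i)).card ≤ k)) := by
        apply Finset.filter_congr
        intro i _
        simp [hBdef, hAdef, hVdef]
      rw [hset, count_rank_le (V ω) hω k (by omega)]
    -- sum of measures
    have hsum : ∑ i : Fin (m + 1), P (B i) = (k : ℝ≥0∞) := by
      calc ∑ i : Fin (m + 1), P (B i)
          = ∑ i : Fin (m + 1), ∫⁻ ω, (B i).indicator (fun _ => (1 : ℝ≥0∞)) ω ∂P := by
            refine Finset.sum_congr rfl fun i _ => ?_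
            rw [lintegral_indicator (hB i), setLIntegral_one]
        _ = ∫⁻ ω, ∑ i : Fin (m + 1), (B i).indicator (fun _ => (1 : ℝ≥0∞)) ω ∂P :=
            (lintegral_finset_sum _ (fun i _ => measurable_one.indicator (hB i))).symm
        _ = ∫⁻ ω, (((Finset.univ.filter (fun i : Fin (m + 1) => ω ∈ B i)).card : ℕ) : ℝ≥0∞) ∂P := by
            refine lintegral_congr fun ω => ?_
            rw [Finset.card_filter, Nat.cast_sum]
            refine Finset.sum_congr rfl fun i _ => ?_
            by_cases h : ω ∈ B i <;> simp [Set.indicator_apply, h]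
        _ = ∫⁻ _ω, ((k : ℕ) : ℝ≥0∞) ∂P := lintegral_congr_ae hcount_ae
        _ = (k : ℝ≥0∞) := by simp
    have hkey : ((m : ℝ≥0∞) + 1) * P (B (Fin.last m)) = (k : ℝ≥0∞) := by
      rw [← hsum, Finset.sum_congr rfl (fun i _ => hPA i),
        Finset.sum_const, Finset.card_univ, Fintype.card_fin, nsmul_eq_mul]
      push_cast
      ring
    have hne0 : ((m : ℝ≥0∞) + 1) ≠ 0 := by simp
    have hnetop : ((m : ℝ≥0∞) + 1) ≠ ⊤ := by simp [ENNReal.add_eq_top]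
    have hcast : ENNReal.ofReal ((m : ℝ) + 1) = (m : ℝ≥0∞) + 1 := by
      rw [show ((m : ℝ) + 1) = ((m + 1 : ℕ) : ℝ) by push_cast; ring,
        ENNReal.ofReal_natCast]
      push_cast
      ring
    have hPB : ENNReal.ofReal (1 - α) ≤ P (B (Fin.last m)) := by
      rw [← ENNReal.mul_le_mul_iff_right hne0 hnetop, hkey]
      calc ((m : ℝ≥0∞) + 1) * ENNReal.ofReal (1 - α)
          = ENNReal.ofReal (((m : ℝ) + 1) * (1 - α)) := by
            rw [ENNReal.ofReal_mul (by positivity), hcast]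
        _ ≤ ENNReal.ofReal ((k : ℕ) : ℝ) := by
            apply ENNReal.ofReal_le_ofReal
            rw [mul_comm]
            exact Nat.le_ceil _
        _ = (k : ℝ≥0∞) := ENNReal.ofReal_natCast k
    -- conclude
    have hsubset : B (Fin.last m) ⊆ E ∪ Dᶜ := by
      intro ω hω
      by_cases hωD : ω ∈ D
      · have hωD' : Function.Injective (V ω) := hωD
        simp only [hBdef, hAdef, Set.mem_preimage, Set.mem_setOf_eq, hVdef] at hω
        have hr : (Finset.univ.filter (fun j : Fin (m + 1) => Z j ω ≤ Z (Fin.last m) ω)).card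
            = (Finset.univ.filter
                (fun i : Fin m => Z i.castSucc ω ≤ Z (Fin.last m) ω)).card + 1 := by
          rw [Finset.card_filter, Finset.card_filter, Fin.sum_univ_castSucc]
          simp
        have hc : (Finset.univ.filter
            (fun i : Fin m => Z i.castSucc ω ≤ Z (Fin.last m) ω)).card < k := by
          rw [hr] at hω
          omega
        exact Or.inl (Or.inr ((kth_mem_iff (V ω) hωD' k hk1 hkm).mpr hc))
      · exact Or.inr hωD
    calc ENNReal.ofReal (1 - α) ≤ P (B (Fin.last m)) := hPB
      _ ≤ P (E ∪ Dᶜ) := measure_mono hsubset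
      _ ≤ P E + P Dᶜ := measure_union_le _ _
      _ = P E := by rw [hD, add_zero]
end

section
/- Let Z_1, ..., Z_{m+1} be exchangeable real-valued random variables that are almost surely pairwise distinct. Define Q as the ceil((1-α)(m+1))-th smallest value among Z_1,...,Z_m (with Q = +∞ if (1-α)(m+1) > m). Then P(Z_{m+1} ≤ Q) ≤ 1 - α + 2/(m+2) whenever (1-α)(m+1) ≤ m. -/
open MeasureTheory Finset ENNReal

section AuxLemmas

open Finset

lemma rank_injective_aux {n : ℕ} {w : Fin n → ℝ} (hw : Function.Injective w) :
    Function.Injective (fun j => (univ.filter fun i => w i ≤ w j).card) := by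
  have key : ∀ a b : Fin n, w a ≤ w b →
      (univ.filter fun i => w i ≤ w a).card = (univ.filter fun i => w i ≤ w b).card →
      w b ≤ w a := by
    intro a b hab hcard
    have hsub : (univ.filter fun i => w i ≤ w a) ⊆ (univ.filter fun i => w i ≤ w b) := by
      intro i hi
      simp only [mem_filter, mem_univ, true_and] at hi ⊢
      linarith
    have heq := Finset.eq_of_subset_of_card_le hsub (le_of_eq hcard.symm)
    have hb : b ∈ (univ.filter fun i => w i ≤ w b) := by simp
    rw [← heq] at hb
    exact (mem_filter.mp hb).2
  intro a b hab
  simp only at hab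
  rcases le_total (w a) (w b) with h | h
  · exact hw (le_antisymm h (key a b h hab))
  · exact hw (le_antisymm (key b a h hab.symm) h)

lemma card_rank_le_aux {n : ℕ} {w : Fin n → ℝ} (hw : Function.Injective w) (k : ℕ) :
    (univ.filter fun j => (univ.filter fun i => w i ≤ w j).card ≤ k).card ≤ k := by
  classical
  have h := Finset.card_le_card_of_injOn
    (s := univ.filter fun j => (univ.filter fun i => w i ≤ w j).card ≤ k)
    (t := Finset.Icc 1 k) (fun j => (univ.filter fun i => w i ≤ w j).card)
    (fun j hj => by
      simp only [Finset.mem_coe, mem_filter, mem_univ, true_and] at hj ⊢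
      rw [Finset.mem_Icc]
      refine ⟨?_, hj⟩
      have : j ∈ univ.filter fun i => w i ≤ w j := by simp
      exact Finset.card_pos.mpr ⟨j, this⟩)
    ((rank_injective_aux hw).injOn)
  simpa [Nat.card_Icc] using h

end AuxLemmas

section AuxLemmas2

open Finset

lemma card_lt_of_le_kthSmallest_aux {m : ℕ} {v : Fin m → ℝ} {z : ℝ} {k : ℕ} (hk1 : 1 ≤ k)
    (hz : ∀ i, z ≠ v i) (h : z ≤ kthSmallest v k) :
    (univ.filter fun i => v i ≤ z).card < k := by
  by_contra hc
  push_neg at hc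
  set S := {t : ℝ | k ≤ (univ.filter fun i => v i ≤ t).card} with hS
  have hzS : z ∈ S := hc
  have hne : (univ.filter fun i => v i ≤ z).Nonempty :=
    Finset.card_pos.mp (lt_of_lt_of_le hk1 hc)
  obtain ⟨i0, hi0⟩ := hne
  have himg : (univ.image v).Nonempty := ⟨v i0, Finset.mem_image_of_mem v (mem_univ i0)⟩
  have hbdd : BddBelow S := by
    refine ⟨(univ.image v).min' himg, fun t ht => ?_⟩
    have hne' : (univ.filter fun i => v i ≤ t).Nonempty :=
      Finset.card_pos.mp (lt_of_lt_of_le hk1 ht)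
    obtain ⟨i, hi⟩ := hne'
    exact le_trans (Finset.min'_le _ _ (Finset.mem_image_of_mem v (mem_univ i)))
      (mem_filter.mp hi).2
  have hQz : kthSmallest v k ≤ z := csInf_le hbdd hzS
  have hzQ : z = kthSmallest v k := le_antisymm h hQz
  obtain ⟨j, hj, hjmax⟩ := Finset.exists_max_image (univ.filter fun i => v i ≤ z) v ⟨i0, hi0⟩
  have hjz : v j ≤ z := (mem_filter.mp hj).2
  have hsub : (univ.filter fun i => v i ≤ z) ⊆ (univ.filter fun i => v i ≤ v j) := by
    intro i hi
    simp only [mem_filter, mem_univ, true_and] at hi ⊢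
    exact hjmax i (by simp [hi])
  have hjS : v j ∈ S := le_trans hc (Finset.card_le_card hsub)
  have : kthSmallest v k ≤ v j := csInf_le hbdd hjS
  have : z = v j := le_antisymm (hzQ ▸ this) hjz
  exact hz j this

end AuxLemmas2

/-- Conformal calibration upper bound: for exchangeable, a.s. pairwise distinct random
variables `Z 0, ..., Z m`, if `(1-α)(m+1) ≤ m` then the probability that `Z m` is at most the
`⌈(1-α)(m+1)⌉`-th smallest of the first `m` values is at most `1 - α + 2/(m+2)`. -/
theorem conformal_coverage_upper_bound
    {Ω : Type*} [MeasurableSpace Ω] (P : Measure Ω) [IsProbabilityMeasure P]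
    (m : ℕ) (Z : Fin (m + 1) → Ω → ℝ) (hZ : ∀ i, Measurable (Z i))
    (hexch : ∀ π : Equiv.Perm (Fin (m + 1)),
      Measure.map (fun ω => fun i => Z (π i) ω) P = Measure.map (fun ω => fun i => Z i ω) P)
    (hties : ∀ i j, i ≠ j → P {ω | Z i ω = Z j ω} = 0)
    (α : ℝ) (hα0 : 0 < α) (hα1 : α < 1)
    (hk : (1 - α) * (m + 1) ≤ m) :
    P {ω | Z (Fin.last m) ω ≤
        kthSmallest (fun i : Fin m => Z i.castSucc ω) ⌈(1 - α) * (m + 1)⌉₊} ≤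
      ENNReal.ofReal (1 - α + 2 / (m + 2)) := by
  classical
  set k : ℕ := ⌈(1 - α) * (m + 1)⌉₊ with hkdef
  have hxpos : (0:ℝ) < (1 - α) * (m + 1) := by
    apply _root_.mul_pos (by linarith)
    positivity
  have hk1 : 1 ≤ k := Nat.one_le_ceil_iff.mpr hxpos
  -- a.e. distinctness
  have hD : ∀ᵐ ω ∂P, ∀ i j, i ≠ j → Z i ω ≠ Z j ω := by
    rw [ae_all_iff]
    intro i
    rw [ae_all_iff]
    intro j
    rcases eq_or_ne i j with h | h
    · exact Filter.Eventually.of_forall fun ω hij => absurd h hij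
    · have h0 : P {ω | ¬ Z i ω ≠ Z j ω} = 0 := by
        simpa using hties i j h
      have : ∀ᵐ ω ∂P, Z i ω ≠ Z j ω := by
        rw [MeasureTheory.ae_iff]
        exact h0
      exact this.mono fun ω hω _ => hω
  -- the rank events
  set A : Fin (m + 1) → Set Ω :=
    fun j => {ω | (univ.filter fun i => Z i ω ≤ Z j ω).card ≤ k} with hAdef
  have hrank_meas : ∀ j, Measurable fun ω => (univ.filter fun i : Fin (m+1) => Z i ω ≤ Z j ω).card := by
    intro j
    have heq : (fun ω => (univ.filter fun i : Fin (m+1) => Z i ω ≤ Z j ω).card)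
        = fun ω => ∑ i : Fin (m+1), if Z i ω ≤ Z j ω then 1 else 0 := by
      funext ω; rw [Finset.card_filter]
    rw [heq]
    exact Finset.measurable_sum _ fun i _ =>
      Measurable.ite (measurableSet_le (hZ i) (hZ j)) measurable_const measurable_const
  have hA : ∀ j, MeasurableSet (A j) := fun j => (hrank_meas j) measurableSet_Iic
  -- the template set B
  set B : Set (Fin (m + 1) → ℝ) :=
    {v | (univ.filter fun i => v i ≤ v (Fin.last m)).card ≤ k} with hBdef
  have hB : MeasurableSet B := by
    have hmeas : Measurable fun v : Fin (m+1) → ℝ =>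
        (univ.filter fun i => v i ≤ v (Fin.last m)).card := by
      have heq : (fun v : Fin (m+1) → ℝ => (univ.filter fun i => v i ≤ v (Fin.last m)).card)
          = fun v => ∑ i : Fin (m+1), if v i ≤ v (Fin.last m) then 1 else 0 := by
        funext v; rw [Finset.card_filter]
      rw [heq]
      exact Finset.measurable_sum _ fun i _ =>
        Measurable.ite (measurableSet_le (measurable_pi_apply i)
          (measurable_pi_apply (Fin.last m))) measurable_const measurable_const
    exact hmeas measurableSet_Iic
  have hmapZ : Measurable (fun ω => fun i => Z i ω) := measurable_pi_lambda _ hZ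
  -- the last-event is preimage of B
  have h2 : (fun ω => fun i => Z i ω) ⁻¹' B = A (Fin.last m) := rfl
  -- all events have same measure
  have hPA : ∀ j, P (A j) = P (A (Fin.last m)) := by
    intro j
    set π := Equiv.swap j (Fin.last m) with hπ
    have hmapπ : Measurable (fun ω => fun i => Z (π i) ω) :=
      measurable_pi_lambda _ fun i => hZ (π i)
    have hcard : ∀ (ω : Ω) (c : ℝ),
        (univ.filter fun i => Z (π i) ω ≤ c).card = (univ.filter fun i => Z i ω ≤ c).card := by
      intro ω c
      rw [Finset.card_filter, Finset.card_filter]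
      exact Equiv.sum_comp π (fun i => if Z i ω ≤ c then 1 else 0)
    have h1 : (fun ω => fun i => Z (π i) ω) ⁻¹' B = A j := by
      ext ω
      have hπl : π (Fin.last m) = j := Equiv.swap_apply_right _ _
      simp only [Set.mem_preimage, hBdef, hAdef, Set.mem_setOf_eq, hπl, hcard ω (Z j ω)]
    calc P (A j) = Measure.map (fun ω => fun i => Z (π i) ω) P B := by
          rw [Measure.map_apply hmapπ hB, h1]
      _ = Measure.map (fun ω => fun i => Z i ω) P B := by rw [hexch π]
      _ = P (A (Fin.last m)) := by rw [Measure.map_apply hmapZ hB, h2]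
  -- sum of indicators bounded by k a.e.
  have hsum : ∑ j : Fin (m + 1), P (A j) ≤ (k : ℝ≥0∞) := by
    have heq : ∑ j : Fin (m + 1), P (A j)
        = ∫⁻ ω, (∑ j : Fin (m+1), (A j).indicator (fun _ => (1:ℝ≥0∞)) ω) ∂P := by
      rw [lintegral_finset_sum _ fun j _ => (measurable_const.indicator (hA j))]
      congr 1
      funext j
      rw [lintegral_indicator (hA j)]
      simp
    rw [heq]
    have hae : ∀ᵐ ω ∂P, (∑ j : Fin (m+1), (A j).indicator (fun _ => (1:ℝ≥0∞)) ω)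
        ≤ (k : ℝ≥0∞) := by
      filter_upwards [hD] with ω hdist
      have hinj : Function.Injective fun i => Z i ω := by
        intro a b hab
        by_contra hne
        exact hdist a b hne hab
      have hsum2 : (∑ j : Fin (m+1), (A j).indicator (fun _ => (1:ℝ≥0∞)) ω)
          = ((univ.filter fun j : Fin (m+1) => ω ∈ A j).card : ℝ≥0∞) := by
        rw [Finset.card_filter]
        push_cast
        refine Finset.sum_congr rfl fun j _ => ?_
        rw [Set.indicator_apply]
      rw [hsum2]
      have hcardle := card_rank_le_aux (w := fun i => Z i ω) hinj k
      have : (univ.filter fun j : Fin (m+1) => ω ∈ A j).card ≤ k := by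
        convert hcardle using 2
        ext j; simp [hAdef]
      exact_mod_cast this
    calc ∫⁻ ω, (∑ j : Fin (m+1), (A j).indicator (fun _ => (1:ℝ≥0∞)) ω) ∂P
        ≤ ∫⁻ _, (k : ℝ≥0∞) ∂P := lintegral_mono_ae hae
      _ = (k : ℝ≥0∞) := by simp
  -- so (m+1) * P(A last) ≤ k
  have hmul : ((m : ℝ≥0∞) + 1) * P (A (Fin.last m)) ≤ (k : ℝ≥0∞) := by
    have : ∑ j : Fin (m + 1), P (A j) = ((m : ℝ≥0∞) + 1) * P (A (Fin.last m)) := by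
      rw [Finset.sum_congr rfl fun j _ => hPA j, Finset.sum_const, Finset.card_univ,
        Fintype.card_fin, nsmul_eq_mul]
      push_cast
      ring
    rw [← this]
    exact hsum
  -- target event is a.e. contained in A last
  have hsubE : P {ω | Z (Fin.last m) ω ≤
      kthSmallest (fun i : Fin m => Z i.castSucc ω) k} ≤ P (A (Fin.last m)) := by
    apply measure_mono_ae
    filter_upwards [hD] with ω hdist hE
    have hzne : ∀ i : Fin m, Z (Fin.last m) ω ≠ Z i.castSucc ω := by
      intro i
      exact hdist (Fin.last m) i.castSucc (ne_of_gt (Fin.castSucc_lt_last i))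
    have hlt : (univ.filter fun i : Fin m => Z i.castSucc ω ≤ Z (Fin.last m) ω).card < k :=
      card_lt_of_le_kthSmallest_aux (v := fun i : Fin m => Z i.castSucc ω)
        (z := Z (Fin.last m) ω) hk1 hzne hE
    show (univ.filter fun i : Fin (m+1) => Z i ω ≤ Z (Fin.last m) ω).card ≤ k
    have hsplit : (univ.filter fun i : Fin (m+1) => Z i ω ≤ Z (Fin.last m) ω).card
        = (univ.filter fun i : Fin m => Z i.castSucc ω ≤ Z (Fin.last m) ω).card + 1 := by
      rw [Finset.card_filter, Finset.card_filter, Fin.sum_univ_castSucc]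
      simp
    omega
  -- final arithmetic
  have hden : ((m : ℝ≥0∞) + 1) ≠ 0 := by simp
  have hdent : ((m : ℝ≥0∞) + 1) ≠ ⊤ :=
    ENNReal.add_ne_top.mpr ⟨ENNReal.natCast_ne_top m, ENNReal.one_ne_top⟩
  have hdiv : P (A (Fin.last m)) ≤ (k : ℝ≥0∞) / ((m : ℝ≥0∞) + 1) := by
    rw [ENNReal.le_div_iff_mul_le (Or.inl hden) (Or.inl hdent)]
    calc P (A (Fin.last m)) * ((m : ℝ≥0∞) + 1)
        = ((m : ℝ≥0∞) + 1) * P (A (Fin.last m)) := by ring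
      _ ≤ (k : ℝ≥0∞) := hmul
  refine le_trans hsubE (le_trans hdiv ?_)
  have hreal : (k : ℝ) / ((m : ℝ) + 1) ≤ 1 - α + 2 / (m + 2) := by
    have hceil : (k : ℝ) < (1 - α) * (m + 1) + 1 :=
      Nat.ceil_lt_add_one (le_of_lt hxpos)
    have hm1 : (0:ℝ) < (m : ℝ) + 1 := by positivity
    rw [div_le_iff₀ hm1]
    have h2 : (1:ℝ) ≤ 2 * ((m:ℝ) + 1) / ((m:ℝ) + 2) := by
      rw [le_div_iff₀ (by positivity)]
      linarith
    have : (1 - α) * (m + 1) + 1 ≤ (1 - α + 2 / (m + 2)) * ((m:ℝ) + 1) := by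
      have h3 : 2 / ((m:ℝ) + 2) * ((m:ℝ) + 1) = 2 * ((m:ℝ)+1) / ((m:ℝ)+2) := by ring
      nlinarith [h2, h3]
    linarith
  calc (k : ℝ≥0∞) / ((m : ℝ≥0∞) + 1)
      = ENNReal.ofReal ((k : ℝ) / ((m : ℝ) + 1)) := by
        rw [ENNReal.ofReal_div_of_pos (by positivity)]
        congr 1
        · exact (ENNReal.ofReal_natCast k).symm
        · rw [show ((m:ℝ) + 1) = ((m + 1 : ℕ) : ℝ) by push_cast; ring,
            ENNReal.ofReal_natCast]
          push_cast
          ring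
    _ ≤ ENNReal.ofReal (1 - α + 2 / (m + 2)) := ENNReal.ofReal_le_ofReal hreal
end
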